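/- Let k be a strictly positive-definite kernel on 𝒳 and let (T, {S_i}, {X̄_i}) be a hierarchical partitioning of 𝒳 (as in the context; strict positive-definiteness of k guarantees each K(X̄_i,X̄_i) is invertible). Then the hierarchically compositional kernel k_hier = k^(root) is strictly positive-definite: for every finite list of pairwise distinct points x₁,…,xₘ ∈ 𝒳 and all real α₁,…,αₘ not all zero, ∑_{i,j} αᵢ αⱼ k_hier(xᵢ,xⱼ) > 0. -/

import Mathlib

open scoped BigOperators

/-- A symmetric function `k` is a positive-definite kernel if for every finite list of
pairwise distinct points `x₁,…,xₘ` and all real coefficients `α₁,…,αₘ`,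
`∑ᵢⱼ αᵢ αⱼ k(xᵢ,xⱼ) ≥ 0`. -/
def PosDefKernel {𝒳 : Type*} (k : 𝒳 → 𝒳 → ℝ) : Prop :=
  ∀ (m : ℕ) (x : Fin m → 𝒳), Function.Injective x →
    ∀ α : Fin m → ℝ, 0 ≤ ∑ i, ∑ j, α i * α j * k (x i) (x j)

/-- A symmetric function `k` is a strictly positive-definite kernel if for every finite list of
pairwise distinct points `x₁,…,xₘ` and all real coefficients not all zero,
`∑ᵢⱼ αᵢ αⱼ k(xᵢ,xⱼ) > 0`. -/
def StrictPosDefKernel {𝒳 : Type*} (k : 𝒳 → 𝒳 → ℝ) : Prop :=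
  ∀ (m : ℕ) (x : Fin m → 𝒳), Function.Injective x →
    ∀ α : Fin m → ℝ, α ≠ 0 → 0 < ∑ i, ∑ j, α i * α j * k (x i) (x j)

/-- A hierarchical partitioning of a set `𝒳`: a finite rooted tree (nodes indexed by
`Fin numNodes`, each nonroot node pointing to its `parent`; nodes are topologically ordered so
that the parent of a nonroot node has a smaller index), assigning to each node `i` a nonempty
subset `S i ⊆ 𝒳` with `S root = 𝒳`, such that the children of any internal node partition it
into pairwise disjoint nonempty cells, every internal node has at least two children, and each
internal node `i` carries a tuple `lm i` of `nlm i` pairwise distinct landmark points belonging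
to `S i` (leaves carry no landmark points). -/
structure HierPartition (𝒳 : Type*) where
  numNodes : ℕ
  root : Fin numNodes
  parent : Fin numNodes → Fin numNodes
  S : Fin numNodes → Set 𝒳
  nlm : Fin numNodes → ℕ
  lm : (i : Fin numNodes) → Fin (nlm i) → 𝒳
  parent_root : parent root = root
  parent_lt : ∀ i, i ≠ root → parent i < i
  S_root : S root = Set.univ
  S_nonempty : ∀ i, (S i).Nonempty
  S_subset : ∀ j, j ≠ root → S j ⊆ S (parent j)
  S_cover : ∀ i, (∃ j, j ≠ root ∧ parent j = i) →
    ∀ x ∈ S i, ∃ j, j ≠ root ∧ parent j = i ∧ x ∈ S j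
  S_disjoint : ∀ j j', j ≠ root → j' ≠ root → parent j = parent j' → j ≠ j' →
    Disjoint (S j) (S j')
  two_children : ∀ i, (∃ j, j ≠ root ∧ parent j = i) →
    ∃ j j', j ≠ root ∧ j' ≠ root ∧ parent j = i ∧ parent j' = i ∧ j ≠ j'
  lm_mem : ∀ i a, lm i a ∈ S i
  lm_inj : ∀ i, Function.Injective (lm i)
  leaf_nlm : ∀ i, (¬∃ j, j ≠ root ∧ parent j = i) → nlm i = 0

namespace HierPartition

variable {𝒳 : Type*}

/-- A node of the tree is a leaf if it has no children. -/
def IsLeaf (H : HierPartition 𝒳) (i : Fin H.numNodes) : Prop :=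
  ¬∃ j, j ≠ H.root ∧ H.parent j = i

/-- The kernel matrix `K(X̄ᵢ, X̄ᵢ)` on the landmark points of node `i`. -/
noncomputable def Kmat (k : 𝒳 → 𝒳 → ℝ) (H : HierPartition 𝒳) (i : Fin H.numNodes) :
    Matrix (Fin (H.nlm i)) (Fin (H.nlm i)) ℝ :=
  Matrix.of fun a b => k (H.lm i a) (H.lm i b)

open Classical in
/-- The row vector `ψ⁽ⁱ⁾(x, X̄ᵢ)` of the hierarchical composition, defined recursively: if the
child `j` of `i` containing `x` is a leaf then `ψ⁽ⁱ⁾(x,X̄ᵢ) = k(x,X̄ᵢ)`, and otherwise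
`ψ⁽ⁱ⁾(x,X̄ᵢ) = ψ⁽ʲ⁾(x,X̄ⱼ)·K(X̄ⱼ,X̄ⱼ)⁻¹·K(X̄ⱼ,X̄ᵢ)`.  (Junk values are returned when `i` is a
leaf or when `x ∉ Sᵢ`.) -/
noncomputable def psi (k : 𝒳 → 𝒳 → ℝ) (H : HierPartition 𝒳) :
    (i : Fin H.numNodes) → 𝒳 → Fin (H.nlm i) → ℝ := fun i x =>
  if h : ∃ j, j ≠ H.root ∧ H.parent j = i ∧ x ∈ H.S j then
    if H.IsLeaf (Classical.choose h) then fun a => k x (H.lm i a)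
    else fun a => ∑ b, ∑ c,
      psi k H (Classical.choose h) x b *
        ((Kmat k H (Classical.choose h))⁻¹ b c) *
        k (H.lm (Classical.choose h) c) (H.lm i a)
  else fun a => k x (H.lm i a)
termination_by i => H.numNodes - i.val
decreasing_by
  have hj := Classical.choose_spec h
  have h1 : i < Classical.choose h := by
    have h2 := H.parent_lt (Classical.choose h) hj.1
    rw [hj.2.1] at h2
    exact h2
  have h1' : i.val < (Classical.choose h).val := h1
  have h2 := (Classical.choose h).isLt
  omega

open Classical in
/-- The hierarchically defined kernel `k⁽ⁱ⁾` at node `i`: for a leaf it is `k` itself; for an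
internal node it equals `k⁽ʲ⁾(x,x')` when `x,x'` belong to a common child `j`, and
`ψ⁽ⁱ⁾(x,X̄ᵢ)·K(X̄ᵢ,X̄ᵢ)⁻¹·ψ⁽ⁱ⁾(X̄ᵢ,x')` otherwise. -/
noncomputable def khat (k : 𝒳 → 𝒳 → ℝ) (H : HierPartition 𝒳) :
    Fin H.numNodes → 𝒳 → 𝒳 → ℝ := fun i x x' =>
  if H.IsLeaf i then k x x'
  else if h : ∃ j, j ≠ H.root ∧ H.parent j = i ∧ x ∈ H.S j ∧ x' ∈ H.S j then
    khat k H (Classical.choose h) x x'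
  else ∑ a, ∑ b, psi k H i x a * ((Kmat k H i)⁻¹ a b) * psi k H i x' b
termination_by i x x' => H.numNodes - i.val
decreasing_by
  have hj := Classical.choose_spec h
  have h1 := H.parent_lt (Classical.choose h) hj.1
  rw [hj.2.1] at h1
  have h1' := Fin.lt_def.mp h1
  have h2 := (Classical.choose h).isLt
  omega

/-- The hierarchically compositional kernel `k_hier = k^(root)`. -/
noncomputable def kHier (k : 𝒳 → 𝒳 → ℝ) (H : HierPartition 𝒳) : 𝒳 → 𝒳 → ℝ :=
  khat k H H.root

end HierPartition

/-!
Extend kernels bilinearly to finitely supported signed measures `μ : 𝒳 →₀ ℝ`. For a node `i`, a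
measure `μ` on `Sᵢ` and landmark coefficients `c`, let
`Qᵢ(μ, c) = ⟨μ, μ⟩_{k⁽ⁱ⁾} - 2 ψ⁽ⁱ⁾(μ)·c + cᵀ K(X̄ᵢ,X̄ᵢ) c` (`augQuad`). By induction from the
leaves, `Qᵢ ≥ 0` with equality only if `μ = ∑ₐ cₐ δ_{x̄ᵢₐ}` (`AugPosDefOn`).

At an internal node, splitting `μ = ∑ⱼ μⱼ` over the children and completing the square in `c`
gives `Qᵢ(μ, c) = ∑ⱼ Qᵢ(μⱼ, dⱼ) + ‖K(X̄ᵢ,X̄ᵢ)⁻¹ψ⁽ⁱ⁾(μ) - c‖²` with `dⱼ = K(X̄ᵢ,X̄ᵢ)⁻¹ψ⁽ⁱ⁾(μⱼ)`,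
the norm being that of `K(X̄ᵢ,X̄ᵢ)`. For a leaf child `j`, `Qᵢ(μⱼ, d)` is the `k`-norm of
`μⱼ - ∑ₐ dₐ δ_{x̄ᵢₐ}`; for an internal child it is
`Qⱼ(μⱼ, c') + ‖∑ₐ dₐ δ_{x̄ᵢₐ} - ∑_b c'_b δ_{x̄ⱼ_b}‖²_k` with `c' = K(X̄ⱼ,X̄ⱼ)⁻¹ K(X̄ⱼ,X̄ᵢ) d`,
the Nyström coefficients of `∑ₐ dₐ δ_{x̄ᵢₐ}` on the landmarks of `j`. At the root,
`Q(μ, 0) = ⟨μ, μ⟩_{k_hier}`.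
-/

open Matrix

theorem Finsupp.linearCombination_congr {α M R : Type*} [Semiring R] [AddCommMonoid M]
    [Module R M] {f g : α → M} {μ : α →₀ R} (h : ∀ y ∈ μ.support, f y = g y) :
    Finsupp.linearCombination R f μ = Finsupp.linearCombination R g μ := by
  simp only [Finsupp.linearCombination_apply]
  exact Finsupp.sum_congr fun y hy => by rw [h y hy]

theorem LinearMap.BilinForm.apply_sum_sum_eq_sum_sub_add {R M ι : Type*} [CommRing R]
    [AddCommGroup M] [Module R M] (B B' : LinearMap.BilinForm R M) (s : Finset ι) (μ : ι → M)
    (h : ∀ j ∈ s, ∀ j' ∈ s, j ≠ j' → B (μ j) (μ j') = B' (μ j) (μ j')) :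
    B (∑ j ∈ s, μ j) (∑ j ∈ s, μ j) =
      ∑ j ∈ s, (B (μ j) (μ j) - B' (μ j) (μ j)) + B' (∑ j ∈ s, μ j) (∑ j ∈ s, μ j) := by
  classical
  simp only [map_sum, LinearMap.sum_apply, ← Finset.sum_add_distrib]
  refine Finset.sum_congr rfl fun j hj => ?_
  rw [← Finset.add_sum_erase s _ hj, ← Finset.add_sum_erase s _ hj,
    Finset.sum_congr rfl fun j' hj' => h j' (Finset.mem_of_mem_erase hj') j hj
      (Finset.ne_of_mem_erase hj')]
  ring

namespace Matrix

variable {n α : Type*} [Fintype n] [CommRing α] {K : Matrix n n α}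

theorem mulVec_inv_mulVec [DecidableEq n] (hK : IsUnit K.det) (v : n → α) :
    K *ᵥ (K⁻¹ *ᵥ v) = v := by
  rw [mulVec_mulVec, mul_nonsing_inv K hK, one_mulVec]

theorem IsSymm.dotProduct_mulVec_comm (hK : K.IsSymm) (u w : n → α) :
    u ⬝ᵥ K *ᵥ w = w ⬝ᵥ K *ᵥ u := by
  rw [dotProduct_mulVec, ← mulVec_transpose, hK.eq, dotProduct_comm]

theorem IsSymm.inv_quad_sub_two_mul_add_quad [DecidableEq n] (hK : K.IsSymm)
    (hdet : IsUnit K.det) (v c : n → α) :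
    v ⬝ᵥ K⁻¹ *ᵥ v - 2 * (v ⬝ᵥ c) + c ⬝ᵥ K *ᵥ c =
      (K⁻¹ *ᵥ v - c) ⬝ᵥ K *ᵥ (K⁻¹ *ᵥ v - c) := by
  rw [mulVec_sub, mulVec_inv_mulVec hdet, sub_dotProduct, dotProduct_sub, dotProduct_sub,
    hK.dotProduct_mulVec_comm (K⁻¹ *ᵥ v), mulVec_inv_mulVec hdet, dotProduct_comm (K⁻¹ *ᵥ v),
    dotProduct_comm c v]
  ring

end Matrix

section KernelForm

variable {𝒳 R : Type*} [CommRing R]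

noncomputable def kernelForm (κ : 𝒳 → 𝒳 → R) : LinearMap.BilinForm R (𝒳 →₀ R) :=
  Finsupp.linearCombination R fun y => Finsupp.linearCombination R (κ y)

noncomputable def diracSum {ι : Type*} [Fintype ι] (x : ι → 𝒳) : (ι → R) →ₗ[R] 𝒳 →₀ R :=
  Fintype.linearCombination R fun a => Finsupp.single (x a) 1

def kernelMatrix {ι ι' : Type*} (κ : 𝒳 → 𝒳 → R) (x : ι → 𝒳) (y : ι' → 𝒳) : Matrix ι ι' R :=
  Matrix.of fun a b => κ (x a) (y b)

variable {κ : 𝒳 → 𝒳 → R}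

theorem diracSum_apply {ι : Type*} [Fintype ι] (x : ι → 𝒳) (c : ι → R) :
    diracSum x c = ∑ a, Finsupp.single (x a) (c a) := by
  simp [diracSum, Fintype.linearCombination_apply]

theorem kernelForm_apply (κ : 𝒳 → 𝒳 → R) (μ ν : 𝒳 →₀ R) :
    kernelForm κ μ ν = μ.sum fun y a => ν.sum fun z b => a * b * κ y z := by
  simp [kernelForm, Finsupp.linearCombination_apply, Finsupp.sum, Finset.mul_sum, mul_assoc]

theorem kernelForm_single_single (κ : 𝒳 → 𝒳 → R) (y z : 𝒳) (a b : R) :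
    kernelForm κ (Finsupp.single y a) (Finsupp.single z b) = a * b * κ y z := by
  simp [kernelForm, mul_assoc]

theorem kernelForm_comm (hsym : ∀ x y, κ x y = κ y x) (μ ν : 𝒳 →₀ R) :
    kernelForm κ μ ν = kernelForm κ ν μ := by
  rw [kernelForm_apply, kernelForm_apply, Finsupp.sum_comm]
  exact Finsupp.sum_congr fun y _ => Finsupp.sum_congr fun z _ => by rw [hsym]; ring

theorem kernelForm_sub_sub (hsym : ∀ x y, κ x y = κ y x) (μ ν : 𝒳 →₀ R) :
    kernelForm κ (μ - ν) (μ - ν) =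
      kernelForm κ μ μ - 2 * kernelForm κ μ ν + kernelForm κ ν ν := by
  simp only [map_sub, LinearMap.sub_apply, kernelForm_comm hsym ν μ]
  ring

theorem kernelForm_congr {κ' : 𝒳 → 𝒳 → R} {μ ν : 𝒳 →₀ R}
    (h : ∀ y ∈ μ.support, ∀ z ∈ ν.support, κ y z = κ' y z) :
    kernelForm κ μ ν = kernelForm κ' μ ν := by
  rw [kernelForm_apply, kernelForm_apply]
  exact Finsupp.sum_congr fun y hy => Finsupp.sum_congr fun z hz => by rw [h y hy z hz]

theorem kernelForm_eq_dotProduct {ι : Type*} [Fintype ι] {f g : 𝒳 → ι → R}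
    {M : Matrix ι ι R} {μ ν : 𝒳 →₀ R}
    (h : ∀ y ∈ μ.support, ∀ z ∈ ν.support, κ y z = f y ⬝ᵥ M *ᵥ g z) :
    kernelForm κ μ ν =
      Finsupp.linearCombination R f μ ⬝ᵥ M *ᵥ Finsupp.linearCombination R g ν := by
  rw [kernelForm_congr h, kernelForm_apply]
  simp only [Finsupp.sum, mul_comm, Finsupp.linearCombination_apply, mulVec_sum, mulVec_smul,
    dotProduct_sum, dotProduct_smul, sum_dotProduct, smul_dotProduct, smul_eq_mul]
  rw [Finset.sum_comm]
  refine Finset.sum_congr rfl fun z _ => ?_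
  rw [Finset.mul_sum]
  exact Finset.sum_congr rfl fun y _ => by ring

theorem kernelForm_diracSum_right {ι : Type*} [Fintype ι] (μ : 𝒳 →₀ R) (x : ι → 𝒳)
    (c : ι → R) :
    kernelForm κ μ (diracSum x c) =
      Finsupp.linearCombination R (fun y a => κ y (x a)) μ ⬝ᵥ c := by
  simp only [diracSum_apply, map_sum, kernelForm_apply]
  simp only [mul_zero, zero_mul, Finsupp.sum_single_index]
  simp [Finsupp.linearCombination_apply, Finsupp.sum, dotProduct, Finset.sum_mul, mul_right_comm]

theorem kernelForm_diracSum_diracSum {ι ι' : Type*} [Fintype ι] [Fintype ι'] (x : ι → 𝒳)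
    (y : ι' → 𝒳) (c : ι → R) (d : ι' → R) :
    kernelForm κ (diracSum x c) (diracSum y d) = c ⬝ᵥ kernelMatrix κ x y *ᵥ d := by
  simp only [diracSum_apply, map_sum, LinearMap.coe_sum, Finset.sum_apply,
    kernelForm_single_single, mul_assoc, dotProduct, mulVec, kernelMatrix, of_apply, Finset.mul_sum]
  rw [Finset.sum_comm]
  exact Finset.sum_congr rfl fun _ _ => Finset.sum_congr rfl fun _ _ => by ring

theorem dotProduct_kernelMatrix_mulVec {ι ι' : Type*} [Fintype ι] [Fintype ι'] (x : ι → 𝒳)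
    (y : ι' → 𝒳) (c : ι → R) (d : ι' → R) :
    c ⬝ᵥ kernelMatrix κ x y *ᵥ d = ∑ a, ∑ b, c a * d b * κ (x a) (y b) := by
  simp [kernelMatrix, dotProduct, mulVec, Finset.mul_sum, mul_comm, mul_left_comm]

theorem diracSum_apply_of_injective {ι : Type*} [Fintype ι] {x : ι → 𝒳}
    (hx : Function.Injective x) (c : ι → R) (p : ι) : diracSum x c (x p) = c p := by
  rw [diracSum_apply, Finsupp.finsetSum_apply, Finset.sum_eq_single p]
  · exact Finsupp.single_eq_same
  · exact fun q _ hqp => Finsupp.single_eq_of_ne (hx.ne hqp).symm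
  · exact fun hp => absurd (Finset.mem_univ p) hp

theorem exists_injective_diracSum_eq (μ : 𝒳 →₀ R) :
    ∃ (m : ℕ) (x : Fin m → 𝒳), Function.Injective x ∧ diracSum x (fun a => μ (x a)) = μ := by
  let e := μ.support.equivFin
  refine ⟨_, fun a => e.symm a, Subtype.val_injective.comp e.symm.injective, ?_⟩
  rw [diracSum_apply, e.symm.sum_comp (fun y : μ.support => Finsupp.single y.1 (μ y.1)),
    Finset.sum_coe_sort μ.support fun y => Finsupp.single y (μ y)]
  exact μ.sum_single

end KernelForm

section StrictPosDef

variable {𝒳 : Type*} {κ : 𝒳 → 𝒳 → ℝ}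

theorem strictPosDefKernel_iff_kernelForm_pos :
    StrictPosDefKernel κ ↔ ∀ μ : 𝒳 →₀ ℝ, μ ≠ 0 → 0 < kernelForm κ μ μ := by
  constructor
  · intro hk μ hμ
    obtain ⟨m, x, hx, hμx⟩ := exists_injective_diracSum_eq μ
    have hα : (fun a => μ (x a)) ≠ 0 := fun h => hμ (by rw [← hμx, h, map_zero])
    rw [← hμx, kernelForm_diracSum_diracSum, dotProduct_kernelMatrix_mulVec]
    exact hk m x hx _ hα
  · intro h m x hx α hα
    obtain ⟨p, hp⟩ := Function.ne_iff.mp hα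
    have hμ : diracSum x α ≠ 0 := fun h0 => hp (by
      rw [← diracSum_apply_of_injective hx α p, h0, Finsupp.zero_apply, Pi.zero_apply])
    simpa only [kernelForm_diracSum_diracSum, dotProduct_kernelMatrix_mulVec] using h _ hμ

theorem StrictPosDefKernel.kernelForm_self_nonneg (hk : StrictPosDefKernel κ) (μ : 𝒳 →₀ ℝ) :
    0 ≤ kernelForm κ μ μ := by
  rcases eq_or_ne μ 0 with rfl | hμ
  · simp
  · exact (strictPosDefKernel_iff_kernelForm_pos.mp hk μ hμ).le

theorem StrictPosDefKernel.eq_zero_of_kernelForm_self_eq_zero (hk : StrictPosDefKernel κ)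
    {μ : 𝒳 →₀ ℝ} (h : kernelForm κ μ μ = 0) : μ = 0 := by
  by_contra hμ
  exact (strictPosDefKernel_iff_kernelForm_pos.mp hk μ hμ).ne' h

theorem StrictPosDefKernel.posDef_kernelMatrix (hk : StrictPosDefKernel κ)
    (hsym : ∀ x y, κ x y = κ y x) {m : ℕ} {x : Fin m → 𝒳} (hx : Function.Injective x) :
    (kernelMatrix κ x x).PosDef := by
  refine Matrix.PosDef.of_dotProduct_mulVec_pos ?_ fun v hv => ?_
  · ext a b
    simp [kernelMatrix, hsym (x a) (x b)]
  · rw [star_trivial, dotProduct_kernelMatrix_mulVec]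
    exact hk m x hx v hv

end StrictPosDef

namespace HierPartition

variable {𝒳 : Type*} (k : 𝒳 → 𝒳 → ℝ) (H : HierPartition 𝒳)

def ChildOf (j i : Fin H.numNodes) : Prop :=
  j ≠ H.root ∧ H.parent j = i

open Classical in
noncomputable def children (i : Fin H.numNodes) : Finset (Fin H.numNodes) :=
  Finset.univ.filter (H.ChildOf · i)

variable {H}

theorem mem_children {i j : Fin H.numNodes} : j ∈ H.children i ↔ H.ChildOf j i := by
  simp [children]

theorem ChildOf.lt {i j : Fin H.numNodes} (hj : H.ChildOf j i) : i < j :=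
  hj.2 ▸ H.parent_lt j hj.1

theorem ChildOf.eq_of_mem {i j j' : Fin H.numNodes} (hj : H.ChildOf j i)
    (hj' : H.ChildOf j' i) {y : 𝒳} (hy : y ∈ H.S j) (hy' : y ∈ H.S j') : j = j' := by
  by_contra hne
  exact Set.disjoint_left.mp (H.S_disjoint j j' hj.1 hj'.1 (hj.2.trans hj'.2.symm) hne) hy hy'

theorem ChildOf.not_isLeaf {i j : Fin H.numNodes} (hj : H.ChildOf j i) : ¬H.IsLeaf i :=
  fun h => h ⟨j, hj⟩

theorem exists_childOf_mem {i : Fin H.numNodes} (hi : ¬H.IsLeaf i) {y : 𝒳} (hy : y ∈ H.S i) :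
    ∃ j, H.ChildOf j i ∧ y ∈ H.S j := by
  obtain ⟨j, hj, hji, hyj⟩ := H.S_cover i (not_not.mp hi) y hy
  exact ⟨j, ⟨hj, hji⟩, hyj⟩

open Classical in
theorem sum_filter_children {i : Fin H.numNodes} (hi : ¬H.IsLeaf i) {μ : 𝒳 →₀ ℝ}
    (hμ : ↑μ.support ⊆ H.S i) : ∑ j ∈ H.children i, μ.filter (· ∈ H.S j) = μ := by
  ext y
  rw [Finsupp.finsetSum_apply]
  by_cases hy : y ∈ μ.support
  · obtain ⟨j, hj, hyj⟩ := exists_childOf_mem hi (hμ hy)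
    rw [Finset.sum_eq_single j (fun j' hj' hne => Finsupp.filter_apply_neg _ _
        fun hyj' => hne (ChildOf.eq_of_mem (mem_children.mp hj') hj hyj' hyj))
        (fun hj' => absurd (mem_children.mpr hj) hj'), Finsupp.filter_apply_pos _ _ hyj]
  · rw [Finsupp.notMem_support_iff.mp hy]
    exact Finset.sum_eq_zero fun j _ => by
      rw [Finsupp.filter_apply, Finsupp.notMem_support_iff.mp hy, ite_self]

open Classical in
theorem support_filter_subset (j : Fin H.numNodes) (μ : 𝒳 →₀ ℝ) :
    ↑(μ.filter (· ∈ H.S j)).support ⊆ H.S j := by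
  intro y hy
  rw [Finset.mem_coe, Finsupp.support_filter, Finset.mem_filter] at hy
  exact hy.2

variable (H)

theorem psi_of_childOf_isLeaf {i j : Fin H.numNodes} (hj : H.ChildOf j i) (hleaf : H.IsLeaf j)
    {y : 𝒳} (hy : y ∈ H.S j) : psi k H i y = fun a => k y (H.lm i a) := by
  have h : ∃ j', j' ≠ H.root ∧ H.parent j' = i ∧ y ∈ H.S j' := ⟨j, hj.1, hj.2, hy⟩
  have hcs := Classical.choose_spec h
  rw [psi, dif_pos h, ChildOf.eq_of_mem ⟨hcs.1, hcs.2.1⟩ hj hcs.2.2 hy, if_pos hleaf]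

theorem psi_of_childOf_not_isLeaf {i j : Fin H.numNodes} (hj : H.ChildOf j i)
    (hleaf : ¬H.IsLeaf j) {y : 𝒳} (hy : y ∈ H.S j) :
    psi k H i y = psi k H j y ᵥ* ((Kmat k H j)⁻¹ * kernelMatrix k (H.lm j) (H.lm i)) := by
  have h : ∃ j', j' ≠ H.root ∧ H.parent j' = i ∧ y ∈ H.S j' := ⟨j, hj.1, hj.2, hy⟩
  have hcs := Classical.choose_spec h
  rw [psi, dif_pos h, ChildOf.eq_of_mem ⟨hcs.1, hcs.2.1⟩ hj hcs.2.2 hy, if_neg hleaf]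
  ext a
  simp only [vecMul, dotProduct, mul_apply, kernelMatrix, of_apply, Finset.mul_sum, mul_assoc]

theorem khat_of_isLeaf {i : Fin H.numNodes} (hi : H.IsLeaf i) (y z : 𝒳) :
    khat k H i y z = k y z := by
  rw [khat, if_pos hi]

theorem khat_of_childOf {i j : Fin H.numNodes} (hi : ¬H.IsLeaf i) (hj : H.ChildOf j i)
    {y z : 𝒳} (hy : y ∈ H.S j) (hz : z ∈ H.S j) : khat k H i y z = khat k H j y z := by
  have h : ∃ j', j' ≠ H.root ∧ H.parent j' = i ∧ y ∈ H.S j' ∧ z ∈ H.S j' :=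
    ⟨j, hj.1, hj.2, hy, hz⟩
  have hcs := Classical.choose_spec h
  rw [khat, if_neg hi, dif_pos h, ChildOf.eq_of_mem ⟨hcs.1, hcs.2.1⟩ hj hcs.2.2.1 hy]

theorem khat_of_childOf_ne {i j j' : Fin H.numNodes} (hi : ¬H.IsLeaf i) (hj : H.ChildOf j i)
    (hj' : H.ChildOf j' i) (hne : j ≠ j') {y z : 𝒳} (hy : y ∈ H.S j) (hz : z ∈ H.S j') :
    khat k H i y z = psi k H i y ⬝ᵥ (Kmat k H i)⁻¹ *ᵥ psi k H i z := by
  have h : ¬∃ j'', j'' ≠ H.root ∧ H.parent j'' = i ∧ y ∈ H.S j'' ∧ z ∈ H.S j'' := by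
    rintro ⟨j'', h1, h2, hy'', hz''⟩
    exact hne ((ChildOf.eq_of_mem ⟨h1, h2⟩ hj hy'' hy).symm.trans
      (ChildOf.eq_of_mem ⟨h1, h2⟩ hj' hz'' hz))
  rw [khat, if_neg hi, dif_neg h]
  simp only [dotProduct, mulVec, Finset.mul_sum, mul_assoc]

theorem Kmat_eq_kernelMatrix (i : Fin H.numNodes) :
    Kmat k H i = kernelMatrix k (H.lm i) (H.lm i) :=
  rfl

theorem posDef_Kmat (hsym : ∀ x y, k x y = k y x) (hk : StrictPosDefKernel k)
    (i : Fin H.numNodes) : (Kmat k H i).PosDef :=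
  hk.posDef_kernelMatrix hsym (H.lm_inj i)

noncomputable def psiMap (i : Fin H.numNodes) : (𝒳 →₀ ℝ) →ₗ[ℝ] Fin (H.nlm i) → ℝ :=
  Finsupp.linearCombination ℝ (psi k H i)

noncomputable def augQuad (i : Fin H.numNodes) (μ : 𝒳 →₀ ℝ) (c : Fin (H.nlm i) → ℝ) : ℝ :=
  kernelForm (khat k H i) μ μ - 2 * (psiMap k H i μ ⬝ᵥ c) + c ⬝ᵥ Kmat k H i *ᵥ c

def AugPosDefOn (i : Fin H.numNodes) (s : Set 𝒳) : Prop :=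
  ∀ (μ : 𝒳 →₀ ℝ) (c : Fin (H.nlm i) → ℝ), ↑μ.support ⊆ s →
    0 ≤ augQuad k H i μ c ∧ (augQuad k H i μ c = 0 → μ = diracSum (H.lm i) c)

variable {k H}

theorem augPosDefOn_of_eq_kernel (hsym : ∀ x y, k x y = k y x) (hk : StrictPosDefKernel k)
    {i : Fin H.numNodes} {s : Set 𝒳} (hkhat : ∀ y ∈ s, ∀ z ∈ s, khat k H i y z = k y z)
    (hpsi : ∀ y ∈ s, psi k H i y = fun a => k y (H.lm i a)) : AugPosDefOn k H i s := by
  intro μ c hμ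
  have hsq : augQuad k H i μ c =
      kernelForm k (μ - diracSum (H.lm i) c) (μ - diracSum (H.lm i) c) := by
    rw [kernelForm_sub_sub hsym, kernelForm_diracSum_right, kernelForm_diracSum_diracSum, augQuad,
      kernelForm_congr fun y hy z hz => hkhat y (hμ hy) z (hμ hz), psiMap,
      Finsupp.linearCombination_congr fun y hy => hpsi y (hμ hy), Kmat_eq_kernelMatrix]
  rw [hsq]
  exact ⟨hk.kernelForm_self_nonneg _,
    fun h => sub_eq_zero.mp (hk.eq_zero_of_kernelForm_self_eq_zero h)⟩

theorem augPosDefOn_of_childOf_not_isLeaf (hsym : ∀ x y, k x y = k y x)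
    (hk : StrictPosDefKernel k) {i j : Fin H.numNodes} (hj : H.ChildOf j i)
    (hleaf : ¬H.IsLeaf j) (hIH : AugPosDefOn k H j (H.S j)) : AugPosDefOn k H i (H.S j) := by
  intro ν d hν
  set G := kernelMatrix k (H.lm j) (H.lm i)
  set c := (Kmat k H j)⁻¹ *ᵥ (G *ᵥ d)
  set ρ := diracSum (H.lm i) d - diracSum (H.lm j) c
  have hkhat : kernelForm (khat k H i) ν ν = kernelForm (khat k H j) ν ν :=
    kernelForm_congr fun y hy z hz => khat_of_childOf k H hj.not_isLeaf hj (hν hy) (hν hz)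
  have hpsi : psiMap k H i ν ⬝ᵥ d = psiMap k H j ν ⬝ᵥ c := by
    have : psiMap k H i ν = psiMap k H j ν ᵥ* ((Kmat k H j)⁻¹ * G) := by
      rw [psiMap, Finsupp.linearCombination_congr fun y hy =>
        psi_of_childOf_not_isLeaf k H hj hleaf (hν hy), psiMap, ← vecMulLinear_apply,
        Finsupp.apply_linearCombination]
      rfl
    rw [this, ← dotProduct_mulVec, ← mulVec_mulVec]
  have hKc : Kmat k H j *ᵥ c = G *ᵥ d :=
    mulVec_inv_mulVec (posDef_Kmat k H hsym hk j).det_pos.ne'.isUnit _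
  have hρ : kernelForm k ρ ρ = d ⬝ᵥ Kmat k H i *ᵥ d - c ⬝ᵥ Kmat k H j *ᵥ c := by
    rw [kernelForm_sub_sub hsym, kernelForm_comm hsym (diracSum (H.lm i) d) (diracSum (H.lm j) c),
      kernelForm_diracSum_diracSum, kernelForm_diracSum_diracSum, kernelForm_diracSum_diracSum,
      ← Kmat_eq_kernelMatrix, ← Kmat_eq_kernelMatrix, hKc]
    ring
  have hdecomp : augQuad k H i ν d = augQuad k H j ν c + kernelForm k ρ ρ := by
    rw [augQuad, augQuad, hkhat, hpsi, hρ]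
    ring
  obtain ⟨hQ, hQ0⟩ := hIH ν c hν
  have hρ_nonneg := hk.kernelForm_self_nonneg ρ
  refine ⟨hdecomp ▸ add_nonneg hQ hρ_nonneg, fun h0 => ?_⟩
  rw [hQ0 (by linarith), eq_comm, ← sub_eq_zero]
  exact hk.eq_zero_of_kernelForm_self_eq_zero (by linarith)

theorem augQuad_inv_mulVec {i : Fin H.numNodes} (hK : (Kmat k H i).PosDef) (ν : 𝒳 →₀ ℝ) :
    augQuad k H i ν ((Kmat k H i)⁻¹ *ᵥ psiMap k H i ν) =
      kernelForm (khat k H i) ν ν - psiMap k H i ν ⬝ᵥ (Kmat k H i)⁻¹ *ᵥ psiMap k H i ν := by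
  rw [augQuad, mulVec_inv_mulVec hK.det_pos.ne'.isUnit, dotProduct_comm _ (psiMap k H i ν)]
  ring

open Classical in
theorem kernelForm_khat_eq_sum_add {i : Fin H.numNodes} (hi : ¬H.IsLeaf i) {μ : 𝒳 →₀ ℝ}
    (hμ : ↑μ.support ⊆ H.S i) :
    kernelForm (khat k H i) μ μ =
      ∑ j ∈ H.children i, (kernelForm (khat k H i) (μ.filter (· ∈ H.S j)) (μ.filter (· ∈ H.S j))
        - psiMap k H i (μ.filter (· ∈ H.S j)) ⬝ᵥ
            (Kmat k H i)⁻¹ *ᵥ psiMap k H i (μ.filter (· ∈ H.S j)))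
      + psiMap k H i μ ⬝ᵥ (Kmat k H i)⁻¹ *ᵥ psiMap k H i μ := by
  let nystrom := fun y z => psi k H i y ⬝ᵥ (Kmat k H i)⁻¹ *ᵥ psi k H i z
  have hnystrom (ν : 𝒳 →₀ ℝ) :
      kernelForm nystrom ν ν = psiMap k H i ν ⬝ᵥ (Kmat k H i)⁻¹ *ᵥ psiMap k H i ν :=
    kernelForm_eq_dotProduct fun _ _ _ _ => rfl
  conv_lhs => rw [← sum_filter_children hi hμ]
  rw [LinearMap.BilinForm.apply_sum_sum_eq_sum_sub_add _ (kernelForm nystrom) _ _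
    fun j hj j' hj' hne => kernelForm_congr fun y hy z hz =>
      khat_of_childOf_ne k H hi (mem_children.mp hj) (mem_children.mp hj') hne
        (support_filter_subset j μ hy) (support_filter_subset j' μ hz),
    sum_filter_children hi hμ]
  simp only [hnystrom]

open Classical in
theorem augQuad_eq_sum_add {i : Fin H.numNodes} (hK : (Kmat k H i).PosDef) (hi : ¬H.IsLeaf i)
    {μ : 𝒳 →₀ ℝ} (hμ : ↑μ.support ⊆ H.S i) (c : Fin (H.nlm i) → ℝ) :
    augQuad k H i μ c =
      ∑ j ∈ H.children i, augQuad k H i (μ.filter (· ∈ H.S j))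
          ((Kmat k H i)⁻¹ *ᵥ psiMap k H i (μ.filter (· ∈ H.S j)))
        + ((Kmat k H i)⁻¹ *ᵥ psiMap k H i μ - c) ⬝ᵥ
            Kmat k H i *ᵥ ((Kmat k H i)⁻¹ *ᵥ psiMap k H i μ - c) := by
  rw [← (isHermitian_iff_isSymm.mp hK.isHermitian).inv_quad_sub_two_mul_add_quad
    hK.det_pos.ne'.isUnit, augQuad, kernelForm_khat_eq_sum_add hi hμ]
  simp only [augQuad_inv_mulVec hK]
  ring

theorem augPosDefOn_of_not_isLeaf {i : Fin H.numNodes} (hK : (Kmat k H i).PosDef)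
    (hi : ¬H.IsLeaf i) (hchild : ∀ j, H.ChildOf j i → AugPosDefOn k H i (H.S j)) :
    AugPosDefOn k H i (H.S i) := by
  classical
  intro μ c hμ
  set cell := fun j => μ.filter (· ∈ H.S j)
  set d := fun j => (Kmat k H i)⁻¹ *ᵥ psiMap k H i (cell j)
  set w := (Kmat k H i)⁻¹ *ᵥ psiMap k H i μ - c
  have hcell (j) (hj : j ∈ H.children i) :=
    hchild j (mem_children.mp hj) (cell j) (d j) (support_filter_subset j μ)
  have hsum : 0 ≤ ∑ j ∈ H.children i, augQuad k H i (cell j) (d j) :=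
    Finset.sum_nonneg fun j hj => (hcell j hj).1
  have hw : 0 ≤ w ⬝ᵥ Kmat k H i *ᵥ w := by
    simpa using hK.posSemidef.dotProduct_mulVec_nonneg w
  rw [augQuad_eq_sum_add hK hi hμ]
  refine ⟨add_nonneg hsum hw, fun h0 => ?_⟩
  have hw0 : w = 0 := by
    by_contra hne
    have := hK.dotProduct_mulVec_pos hne
    rw [star_trivial] at this
    linarith
  have hcell0 := (Finset.sum_eq_zero_iff_of_nonneg fun j hj => (hcell j hj).1).mp (by linarith)
  calc μ = ∑ j ∈ H.children i, cell j := (sum_filter_children hi hμ).symm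
    _ = ∑ j ∈ H.children i, diracSum (H.lm i) (d j) :=
      Finset.sum_congr rfl fun j hj => (hcell j hj).2 (hcell0 j hj)
    _ = diracSum (H.lm i) ((Kmat k H i)⁻¹ *ᵥ psiMap k H i μ) := by
      rw [← map_sum, ← mulVec_sum, ← map_sum, sum_filter_children hi hμ]
    _ = diracSum (H.lm i) c := by rw [sub_eq_zero.mp hw0]

theorem augPosDefOn_S (hsym : ∀ x y, k x y = k y x) (hk : StrictPosDefKernel k)
    (i : Fin H.numNodes) : AugPosDefOn k H i (H.S i) := by
  induction i using WellFoundedGT.induction with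
  | _ i IH =>
  by_cases hi : H.IsLeaf i
  · have : IsEmpty (Fin (H.nlm i)) := by rw [H.leaf_nlm i hi]; infer_instance
    exact augPosDefOn_of_eq_kernel hsym hk (fun y _ z _ => khat_of_isLeaf k H hi y z)
      fun _ _ => Subsingleton.elim _ _
  refine augPosDefOn_of_not_isLeaf (posDef_Kmat k H hsym hk i) hi fun j hj => ?_
  by_cases hj_leaf : H.IsLeaf j
  · exact augPosDefOn_of_eq_kernel hsym hk
      (fun y hy z hz => (khat_of_childOf k H hi hj hy hz).trans (khat_of_isLeaf k H hj_leaf y z))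
      fun y hy => psi_of_childOf_isLeaf k H hj hj_leaf hy
  · exact augPosDefOn_of_childOf_not_isLeaf hsym hk hj hj_leaf (IH j hj.lt)

end HierPartition

/-- if `k` is a strictly positive-definite kernel and `(T, {Sᵢ}, {X̄ᵢ})` is a
hierarchical partitioning of `𝒳` (strict positive-definiteness of `k` guarantees that each
landmark kernel matrix `K(X̄ᵢ,X̄ᵢ)` is invertible), then the hierarchically compositional
kernel `k_hier = k^(root)` is strictly positive-definite. -/
theorem kHier_strictPosDefKernel {𝒳 : Type*} (k : 𝒳 → 𝒳 → ℝ)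
    (hsym : ∀ x y, k x y = k y x)
    (hk : StrictPosDefKernel k)
    (H : HierPartition 𝒳) :
    StrictPosDefKernel (HierPartition.kHier k H) := by
  refine strictPosDefKernel_iff_kernelForm_pos.mpr fun μ hμ => ?_
  obtain ⟨hnonneg, hzero⟩ := HierPartition.augPosDefOn_S hsym hk H.root μ 0
    (H.S_root ▸ Set.subset_univ _)
  have hQ : HierPartition.augQuad k H H.root μ 0 = kernelForm (HierPartition.kHier k H) μ μ := by
    simp [HierPartition.augQuad, HierPartition.kHier]
  rw [hQ] at hnonneg hzero
  exact hnonneg.lt_of_ne fun h => hμ (by rw [hzero h.symm, map_zero])
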